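/- arXiv:math/0104119 — 7 statements merged into one kernel-verified Lean document; each statement's English description precedes it below -/
import Mathlib

section
/- Let X be a complex Banach space and let F be a finite-dimensional subspace of the dual space X*. If ψ is a linear functional on F with ‖ψ‖ < 1, then there exists x ∈ X with ‖x‖ < 1 such that x*(x) = ψ(x*) for every x* ∈ F. -/
open NormedSpace

set_option maxHeartbeats 1000000 in
set_option synthInstance.maxHeartbeats 400000 in

/-- **Hahn–Banach variant.** Let `X` be a complex Banach space and `F` a finite-dimensional
subspace of the dual `X*`. If `ψ` is a linear functional on `F` with `‖ψ‖ < 1`, then there is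
`x ∈ X` with `‖x‖ < 1` such that `f x = ψ f` for all `f ∈ F`. -/
theorem hahn_banach_finite_dim_predual
    (X : Type*) [NormedAddCommGroup X] [NormedSpace ℂ X] [CompleteSpace X]
    (F : Submodule ℂ (StrongDual ℂ X)) [FiniteDimensional ℂ F]
    (ψ : F →L[ℂ] ℂ) (hψ : @Norm.norm _ (ContinuousLinearMap.hasOpNorm (E := F) (F := ℂ) (𝕜 := ℂ) (𝕜₂ := ℂ)) ψ < 1) :
    ∃ x : X, ‖x‖ < 1 ∧ ∀ f : F, (f : StrongDual ℂ X) x = ψ f := by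
  classical
  -- the evaluation bilinear map
  set B : X →ₗ[ℂ] (F →ₗ[ℂ] ℂ) :=
    ((ContinuousLinearMap.coeLM ℂ).comp F.subtype).flip with hB
  have hBapply : ∀ (x : X) (f : F), B x f = (f : StrongDual ℂ X) x := fun x f => rfl
  set N : Submodule ℂ X := LinearMap.ker B with hN
  have hmemN : ∀ x : X, x ∈ N ↔ ∀ f : F, (f : StrongDual ℂ X) x = 0 := by
    intro x
    constructor
    · intro hx f
      have : B x = 0 := hx
      simpa [hBapply] using congrFun (congrArg DFunLike.coe this) f
    · intro h
      show B x = 0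
      ext f
      simpa [hBapply] using h f
  haveI hNclosed : IsClosed (N : Set X) := by
    have : (N : Set X) = ⋂ f : F, ((f : StrongDual ℂ X) ⁻¹' {0}) := by
      ext x
      simp [Set.mem_iInter, hmemN x, SetLike.mem_coe]
    rw [this]
    exact isClosed_iInter fun f => IsClosed.preimage (f : StrongDual ℂ X).continuous isClosed_singleton
  -- the quotient
  set Q := X ⧸ N with hQ
  set e : Q →ₗ[ℂ] (F →ₗ[ℂ] ℂ) := N.liftQ B le_rfl with he
  have heapply : ∀ (x : X) (f : F),
      e (Submodule.Quotient.mk x) f = (f : StrongDual ℂ X) x := fun x f => rfl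
  have einj : Function.Injective e := by
    rw [← LinearMap.ker_eq_bot, he, Submodule.ker_liftQ_eq_bot]
    exact le_rfl
  haveI : FiniteDimensional ℂ (F →ₗ[ℂ] ℂ) := Subspace.instModuleDualFiniteDimensional (K := ℂ) (V := F)
  haveI : FiniteDimensional ℂ Q := FiniteDimensional.of_injective e einj
  haveI : FiniteDimensional ℂ (Q →ₗ[ℂ] ℂ) := Subspace.instModuleDualFiniteDimensional (K := ℂ) (V := Q)
  set j : F →ₗ[ℂ] (Q →ₗ[ℂ] ℂ) := e.flip with hj
  have jinj : Function.Injective j := by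
    refine (LinearMap.ker_eq_bot (R := ℂ) (R₂ := ℂ) (M := F) (M₂ := Q →ₗ[ℂ] ℂ) (f := j)).mp ?_
    rw [Submodule.eq_bot_iff]
    intro f hf
    have hf' : ∀ x : X, (f : StrongDual ℂ X) x = 0 := by
      intro x
      have := congrFun (congrArg DFunLike.coe (hf : j f = 0)) (Submodule.Quotient.mk x)
      simpa [hj, heapply] using this
    have : (f : StrongDual ℂ X) = 0 := by ext x; exact hf' x
    exact Subtype.ext this
  -- dimension count
  have hd1 : Module.finrank ℂ Q ≤ Module.finrank ℂ F := by
    calc Module.finrank ℂ Q ≤ Module.finrank ℂ (F →ₗ[ℂ] ℂ) :=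
          LinearMap.finrank_le_finrank_of_injective einj
      _ = Module.finrank ℂ F := Subspace.dual_finrank_eq (K := ℂ) (V := F)
  have hd2 : Module.finrank ℂ F ≤ Module.finrank ℂ Q := by
    calc Module.finrank ℂ F ≤ Module.finrank ℂ (Q →ₗ[ℂ] ℂ) :=
          LinearMap.finrank_le_finrank_of_injective jinj
      _ = Module.finrank ℂ Q := Subspace.dual_finrank_eq (K := ℂ) (V := Q)
  have hdQF : Module.finrank ℂ Q = Module.finrank ℂ F := le_antisymm hd1 hd2
  have esurj : Function.Surjective e :=
    (LinearMap.injective_iff_surjective_of_finrank_eq_finrank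
      (hdQF.trans (Subspace.dual_finrank_eq (K := ℂ) (V := F)).symm)).mp einj
  have jsurj : Function.Surjective j :=
    (LinearMap.injective_iff_surjective_of_finrank_eq_finrank (K := ℂ) (V := F) (V₂ := Q →ₗ[ℂ] ℂ)
      ((Subspace.dual_finrank_eq (K := ℂ) (V := Q)).trans hdQF).symm (f := j)).mp jinj
  -- the element of the quotient representing ψ
  obtain ⟨q, hq⟩ := esurj (ψ : F →ₗ[ℂ] ℂ)
  have hqf : ∀ f : F, e q f = ψ f := fun f => by rw [hq]; rfl
  -- norm bound on q
  letI : SeminormedAddCommGroup (F →L[ℂ] ℂ) := ContinuousLinearMap.toSeminormedAddCommGroup (E := F) (F := ℂ) (𝕜 := ℂ) (𝕜₂ := ℂ)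
  have hqnorm : ‖q‖ ≤ ‖ψ‖ := by
    apply norm_le_dual_bound ℂ q (norm_nonneg ψ)
    intro g
    obtain ⟨f, hf⟩ := jsurj (g : Q →ₗ[ℂ] ℂ)
    have hgq : ∀ q' : Q, g q' = e q' f := by
      intro q'
      have := congrFun (congrArg DFunLike.coe hf) q'
      simpa [hj] using this.symm
    have hfg : ‖f‖ ≤ ‖g‖ := by
      have : ‖(f : StrongDual ℂ X)‖ ≤ ‖g‖ := by
        apply ContinuousLinearMap.opNorm_le_bound _ (norm_nonneg g)
        intro x
        have h1 : (f : StrongDual ℂ X) x = g (Submodule.Quotient.mk x) := by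
          rw [hgq, heapply]
        rw [h1]
        calc ‖g (Submodule.Quotient.mk x)‖
            ≤ ‖g‖ * ‖(Submodule.Quotient.mk x : Q)‖ := g.le_opNorm _
          _ ≤ ‖g‖ * ‖x‖ := by
              gcongr
              exact Submodule.Quotient.norm_mk_le _ _
      exact this
    calc ‖g q‖ = ‖ψ f‖ := by rw [hgq q, hqf]
      _ ≤ ‖ψ‖ * ‖f‖ := ContinuousLinearMap.le_opNorm (E := F) (F := ℂ) (𝕜 := ℂ) (𝕜₂ := ℂ) ψ f
      _ ≤ ‖ψ‖ * ‖g‖ := by gcongr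
  -- pick a good representative
  have hqlt : ‖q‖ < 1 := lt_of_le_of_lt hqnorm hψ
  obtain ⟨x, hx, hxnorm⟩ := Submodule.Quotient.norm_mk_lt q (show (0:ℝ) < 1 - ‖q‖ by linarith)
  refine ⟨x, by linarith, fun f => ?_⟩
  rw [← heapply x f, hx, hqf]
end

section
/- Let X and Y be complex Banach spaces and T : X → Y a bounded linear operator. The following are equivalent: (1) the kernel of the second adjoint T** : X** → Y** is {0}; (2) every bounded sequence (x_n) in X with lim_{n→∞} ‖T x_n‖ = 0 converges weakly to 0. -/
open NormedSpace Filter Topology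

/-- The adjoint (dual map) of a continuous linear operator between normed spaces. -/
noncomputable def dualOp {X Y : Type*} [NormedAddCommGroup X] [NormedSpace ℂ X]
    [NormedAddCommGroup Y] [NormedSpace ℂ Y] (T : X →L[ℂ] Y) :
    StrongDual ℂ Y →L[ℂ] StrongDual ℂ X :=
  (ContinuousLinearMap.compL ℂ X Y ℂ).flip T

/-- The second adjoint `T** : X** → Y**`. -/
noncomputable def bidualOp {X Y : Type*} [NormedAddCommGroup X] [NormedSpace ℂ X]
    [NormedAddCommGroup Y] [NormedSpace ℂ Y] (T : X →L[ℂ] Y) :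
    StrongDual ℂ (StrongDual ℂ X) →L[ℂ] StrongDual ℂ (StrongDual ℂ Y) :=
  dualOp (dualOp T)

lemma dualOp_apply {X Y : Type*} [NormedAddCommGroup X] [NormedSpace ℂ X]
    [NormedAddCommGroup Y] [NormedSpace ℂ Y] (T : X →L[ℂ] Y) (g : StrongDual ℂ Y) (x : X) :
    dualOp T g x = g (T x) := rfl

lemma bidualOp_apply {X Y : Type*} [NormedAddCommGroup X] [NormedSpace ℂ X]
    [NormedAddCommGroup Y] [NormedSpace ℂ Y] (T : X →L[ℂ] Y) (Φ : StrongDual ℂ (StrongDual ℂ X))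
    (g : StrongDual ℂ Y) : bidualOp T Φ g = Φ (dualOp T g) := rfl

lemma clm_eq_of_re {X : Type*} [NormedAddCommGroup X] [NormedSpace ℂ X]
    (p q : X →L[ℂ] ℂ) (h : ∀ x, (p x).re = (q x).re) : p = q := by
  ext x
  apply Complex.ext
  · exact h x
  · have h1 : p (Complex.I • x) = Complex.I * p x := by rw [map_smul]; rfl
    have h2 : q (Complex.I • x) = Complex.I * q x := by rw [map_smul]; rfl
    have := h (Complex.I • x)
    rw [h1, h2] at this
    simpa using this

lemma re_extend {X : Type*} [NormedAddCommGroup X] [NormedSpace ℂ X]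
    (ψ : X →L[ℝ] ℝ) (x : X) : (ψ.extendTo𝕜' x : ℂ).re = ψ x := by
  exact StrongDual.re_extendRCLike_apply (𝕜 := ℂ) ψ x

lemma backward_dir {X Y : Type*} [NormedAddCommGroup X] [NormedSpace ℂ X]
    [NormedAddCommGroup Y] [NormedSpace ℂ Y] (T : X →L[ℂ] Y)
    (hyp : ∀ x : ℕ → X, (∃ C : ℝ, ∀ n, ‖x n‖ ≤ C) →
        Tendsto (fun n => ‖T (x n)‖) atTop (𝓝 0) →
        ∀ f : StrongDual ℂ X, Tendsto (fun n => f (x n)) atTop (𝓝 (0 : ℂ))) :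
    LinearMap.ker (bidualOp T).toLinearMap = ⊥ := by
  rw [LinearMap.ker_eq_bot']
  intro Φ hΦ
  by_contra hne
  -- find f with Φ f = 1
  obtain ⟨f₀, hf₀⟩ : ∃ f₀ : StrongDual ℂ X, Φ f₀ ≠ 0 := by
    by_contra h
    push_neg at h
    exact hne (by ext g; simp [h g])
  set f : StrongDual ℂ X := (Φ f₀)⁻¹ • f₀ with hf
  have hΦf : Φ f = 1 := by
    simp [hf, map_smul, inv_mul_cancel₀ hf₀]
  have hΦpos : (0:ℝ) < ‖Φ‖ := lt_of_le_of_ne (ContinuousLinearMap.opNorm_nonneg Φ)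
    (fun h => hne ((ContinuousLinearMap.opNorm_zero_iff Φ).mp h.symm))
  set C : ℝ := 2 * ‖Φ‖ with hC
  have hCpos : 0 < C := by positivity
  set L : X →L[ℂ] Y × ℂ := T.prod f with hL
  set W : Set (Y × ℂ) := L '' Metric.closedBall (0:X) C with hW
  by_cases hcl : ((0:Y), (1:ℂ)) ∈ closure W
  · -- extract a sequence, contradict hyp
    have hseq : ∀ n : ℕ, ∃ x : X, ‖x‖ ≤ C ∧ dist (L x) ((0:Y), (1:ℂ)) < 1/(n+1) := by
      intro n
      rw [Metric.mem_closure_iff] at hcl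
      obtain ⟨w, hwW, hwd⟩ := hcl (1/(n+1)) (by positivity)
      obtain ⟨x, hx, rfl⟩ := hwW
      exact ⟨x, by simpa using hx, by rwa [dist_comm]⟩
    choose x hxC hxd using hseq
    have hT0 : Tendsto (fun n => ‖T (x n)‖) atTop (𝓝 0) := by
      have hb : ∀ n : ℕ, ‖T (x n)‖ ≤ 1/(n+1) := by
        intro n
        have := hxd n
        have h1 : dist (T (x n)) (0:Y) ≤ dist (L (x n)) ((0:Y), (1:ℂ)) :=
          Prod.dist_eq.le.trans' (le_max_left _ _) |>.trans_eq' rfl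
        simp only [dist_zero_right] at h1
        linarith
      have h2 : Tendsto (fun n : ℕ => 1/((n:ℝ)+1)) atTop (𝓝 0) :=
        tendsto_one_div_add_atTop_nhds_zero_nat
      exact squeeze_zero (fun n => norm_nonneg _) hb h2
    have hfx : Tendsto (fun n => f (x n)) atTop (𝓝 (0:ℂ)) :=
      hyp x ⟨C, hxC⟩ hT0 f
    have hfx1 : Tendsto (fun n => f (x n)) atTop (𝓝 (1:ℂ)) := by
      have hb : ∀ n : ℕ, dist (f (x n)) 1 ≤ 1/(n+1) := by
        intro n
        have := hxd n
        have h1 : dist (f (x n)) (1:ℂ) ≤ dist (L (x n)) ((0:Y), (1:ℂ)) :=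
          Prod.dist_eq.le.trans' (le_max_right _ _) |>.trans_eq' rfl
        linarith
      rw [tendsto_iff_dist_tendsto_zero]
      exact squeeze_zero (fun n => dist_nonneg) hb tendsto_one_div_add_atTop_nhds_zero_nat
    exact one_ne_zero (tendsto_nhds_unique hfx1 hfx)
  · -- separation
    have hWconv : Convex ℝ (closure W) := by
      refine Convex.closure ?_
      exact (convex_closedBall (0:X) C).linear_image (L.restrictScalars ℝ).toLinearMap
    obtain ⟨u, u₀, hu1, hu2⟩ :=
      geometric_hahn_banach_closed_point hWconv isClosed_closure hcl
    have h0W : ((0, 0) : Y × ℂ) ∈ closure W := by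
      apply subset_closure
      exact ⟨0, by simpa using hCpos.le, by simp; rfl⟩
    have hu₀pos : 0 < u₀ := by
      have := hu1 _ h0W
      have h00 : ((0, 0) : Y × ℂ) = 0 := rfl
      rw [h00, map_zero] at this
      exact this
    set ψ : X →L[ℝ] ℝ := u.comp (L.restrictScalars ℝ) with hψ
    set h : X →L[ℂ] ℂ := ψ.extendTo𝕜' with hh
    -- norm bound on h
    have hball : ∀ x : X, ‖x‖ ≤ C → ‖h x‖ ≤ u₀ := by
      intro x hx
      rcases eq_or_ne (h x) 0 with h0 | h0
      · simp [h0, hu₀pos.le]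
      · set c : ℂ := (‖h x‖ : ℂ) / (h x) with hc
        have hcn : ‖c‖ = 1 := by
          simp [hc, norm_div, h0, div_self, norm_ne_zero_iff.mpr h0]
        have hcx : ‖c • x‖ ≤ C := by rwa [norm_smul, hcn, one_mul]
        have hre : (h (c • x)).re = ψ (c • x) := re_extend ψ _
        have hval : h (c • x) = (‖h x‖ : ℂ) := by
          rw [map_smul, smul_eq_mul, hc, div_mul_cancel₀ _ h0]
        have hmem : L (c • x) ∈ closure W :=
          subset_closure ⟨c • x, by simpa using hcx, rfl⟩
        have hlt : u (L (c • x)) < u₀ := hu1 _ hmem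
        have : (h (c • x)).re ≤ u₀ := by rw [hre]; exact hlt.le
        rw [hval] at this
        simpa using this
    have hnorm : ‖h‖ ≤ u₀ / C := by
      apply ContinuousLinearMap.opNorm_le_bound _ (by positivity)
      intro x
      rcases eq_or_ne x 0 with rfl | hx0
      · simp
      · have hnx : 0 < ‖x‖ := norm_pos_iff.mpr hx0
        set r : ℝ := C / ‖x‖ with hr
        have hrpos : 0 < r := by positivity
        have hrx : ‖r • x‖ ≤ C := by
          rw [norm_smul, Real.norm_of_nonneg hrpos.le, hr, div_mul_cancel₀ _ hnx.ne']
        have key := hball (r • x) hrx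
        have hsm : h (r • x) = r • h x := h.map_smul_of_tower r x
        rw [hsm, norm_smul, Real.norm_of_nonneg hrpos.le] at key
        -- key : r * ‖h x‖ ≤ u₀
        have key2 : C * ‖h x‖ ≤ u₀ * ‖x‖ := by
          rw [hr, div_mul_eq_mul_div, div_le_iff₀ hnx] at key
          linarith
        have goal2 : ‖h x‖ ≤ u₀ * ‖x‖ / C := by
          rw [le_div_iff₀ hCpos]; linarith
        calc ‖h x‖ ≤ u₀ * ‖x‖ / C := goal2
          _ = u₀ / C * ‖x‖ := by ring
    -- decompose h = T* g + lam • f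
    set g : StrongDual ℂ Y := (u.comp (ContinuousLinearMap.inl ℝ Y ℂ)).extendTo𝕜' with hg
    set μ : ℂ →L[ℂ] ℂ := (u.comp (ContinuousLinearMap.inr ℝ Y ℂ)).extendTo𝕜' with hμ
    set lam : ℂ := μ 1 with hlam
    have hdecomp : h = dualOp T g + lam • f := by
      apply clm_eq_of_re
      intro x
      have h1 : (h x).re = u (T x, f x) := re_extend ψ x
      have h2 : ((dualOp T g + lam • f) x).re = (g (T x)).re + (lam * f x).re := by
        simp [ContinuousLinearMap.add_apply, ContinuousLinearMap.smul_apply,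
          Complex.add_re, smul_eq_mul, dualOp_apply]
      have h3 : (g (T x)).re = u (T x, 0) :=
        re_extend (u.comp (ContinuousLinearMap.inl ℝ Y ℂ)) (T x)
      have h4 : (lam * f x).re = u (0, f x) := by
        have hμfx : μ (f x) = f x * lam := by
          conv_lhs => rw [show f x = f x • (1:ℂ) by simp]
          rw [map_smul, smul_eq_mul, hlam]
        have h5 : (μ (f x)).re = u (0, f x) :=
          re_extend (u.comp (ContinuousLinearMap.inr ℝ Y ℂ)) (f x)
        rw [hμfx] at h5
        rw [mul_comm]
        exact h5
      rw [h1, h2, h3, h4]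
      have hsplit : ((T x, f x) : Y × ℂ) = (T x, 0) + (0, f x) := by simp
      rw [hsplit, map_add]
    have hΦh : Φ h = lam := by
      rw [hdecomp, map_add, map_smul]
      have hzero : Φ (dualOp T g) = 0 := by
        have := congrArg (fun Ψ : StrongDual ℂ (StrongDual ℂ Y) => Ψ g) hΦ
        simpa [bidualOp_apply] using this
      rw [hzero, hΦf]
      simp [smul_eq_mul]
    have hrelam : u₀ < lam.re := by
      have h2 : lam.re = u (0, 1) :=
        re_extend (u.comp (ContinuousLinearMap.inr ℝ Y ℂ)) 1
      linarith [hu2]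
    have hlamnorm : ‖lam‖ ≤ ‖Φ‖ * (u₀ / C) := by
      rw [← hΦh]
      exact (Φ.le_opNorm h).trans (by
        have := mul_le_mul_of_nonneg_left hnorm (norm_nonneg Φ)
        linarith)
    have hre_le : lam.re ≤ ‖lam‖ :=
      (le_abs_self _).trans (Complex.abs_re_le_norm lam)
    have hhalf : ‖Φ‖ * (u₀ / C) = u₀ / 2 := by
      rw [hC]; field_simp
    linarith

lemma forward_dir {X Y : Type*} [NormedAddCommGroup X] [NormedSpace ℂ X]
    [NormedAddCommGroup Y] [NormedSpace ℂ Y] (T : X →L[ℂ] Y)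
    (hker : LinearMap.ker (bidualOp T).toLinearMap = ⊥)
    (x : ℕ → X) (hC : ∃ C : ℝ, ∀ n, ‖x n‖ ≤ C)
    (hTx : Tendsto (fun n => ‖T (x n)‖) atTop (𝓝 0))
    (f : StrongDual ℂ X) : Tendsto (fun n => f (x n)) atTop (𝓝 (0 : ℂ)) := by
  obtain ⟨C, hCb⟩ := hC
  by_contra hnot
  -- extract ε and a frequently-big set
  obtain ⟨ε, hεpos, hfreq⟩ : ∃ ε > 0, ∃ᶠ n in atTop, ε ≤ ‖f (x n)‖ := by
    rw [Metric.tendsto_atTop] at hnot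
    push_neg at hnot
    obtain ⟨ε, hε, hN⟩ := hnot
    refine ⟨ε, hε, frequently_atTop.mpr fun N => ?_⟩
    obtain ⟨n, hn, hd⟩ := hN N
    exact ⟨n, hn, by simpa [dist_eq_norm] using hd⟩
  set S : Set ℕ := {n | ε ≤ ‖f (x n)‖} with hS
  have hneBot : (atTop ⊓ 𝓟 S).NeBot := frequently_iff_neBot.mp hfreq
  have hU := Ultrafilter.of_le (atTop ⊓ 𝓟 S)
  set U : Ultrafilter ℕ := Ultrafilter.of (atTop ⊓ 𝓟 S) with hUdef
  have hUatTop : (U : Filter ℕ) ≤ atTop := hU.trans inf_le_left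
  have hUS : S ∈ U := hU (mem_inf_of_right (mem_principal_self S))
  -- the sequence in the weak dual
  set φ : ℕ → WeakDual ℂ (StrongDual ℂ X) :=
    fun n => StrongDual.toWeakDual (inclusionInDoubleDual ℂ X (x n)) with hφ
  have hCnonneg : 0 ≤ C := (norm_nonneg (x 0)).trans (hCb 0)
  set K : Set (WeakDual ℂ (StrongDual ℂ X)) :=
    WeakDual.toStrongDual ⁻¹' Metric.closedBall (0 : StrongDual ℂ (StrongDual ℂ X)) C with hK
  have hKcomp : IsCompact K := WeakDual.isCompact_closedBall (𝕜 := ℂ) (0 : StrongDual ℂ (StrongDual ℂ X)) C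
  have hmem : ∀ n, φ n ∈ K := by
    intro n
    simp only [hK, Set.mem_preimage, Metric.mem_closedBall, dist_zero_right]
    calc dist (WeakDual.toStrongDual (φ n)) 0 = ‖inclusionInDoubleDual ℂ X (x n)‖ := by
          exact (dist_zero_right (WeakDual.toStrongDual (φ n))).trans rfl
      _ ≤ ‖x n‖ := by
          exact (ContinuousLinearMap.le_of_opNorm_le _
            (inclusionInDoubleDual_norm_le ℂ X) (x n)).trans_eq (one_mul _)
      _ ≤ C := hCb n
  obtain ⟨Φw, hΦK, hlim⟩ := hKcomp.ultrafilter_le_nhds (U.map φ)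
    (by rw [Ultrafilter.coe_map, le_principal_iff, mem_map]
        exact univ_mem' hmem)
  have hlim' : Tendsto φ U (𝓝 Φw) := hlim
  have heval : ∀ g : StrongDual ℂ X, Tendsto (fun n => g (x n)) U (𝓝 (Φw g)) := by
    intro g
    have := (tendsto_iff_forall_eval_tendsto_topDualPairing.mp hlim') g
    exact this
  set Φ : StrongDual ℂ (StrongDual ℂ X) := StrongDual.toWeakDual.symm Φw with hΦdef
  have hΦap : ∀ g : StrongDual ℂ X, Φ g = Φw g := fun g => rfl
  have hTΦ : bidualOp T Φ = 0 := by
    ext g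
    rw [bidualOp_apply, ContinuousLinearMap.zero_apply, hΦap]
    have h1 : Tendsto (fun n => (dualOp T g) (x n)) U (𝓝 (Φw (dualOp T g))) :=
      heval (dualOp T g)
    have h2 : Tendsto (fun n => (dualOp T g) (x n)) atTop (𝓝 0) := by
      apply squeeze_zero_norm (fun n => ?_) (by
        simpa using hTx.const_mul ‖g‖)
      calc ‖(dualOp T g) (x n)‖ = ‖g (T (x n))‖ := rfl
        _ ≤ ‖g‖ * ‖T (x n)‖ := g.le_opNorm _
    exact tendsto_nhds_unique h1 (h2.mono_left hUatTop)
  have hΦ0 : Φ = 0 := by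
    have := hker ▸ LinearMap.mem_ker.mpr hTΦ
    simpa using this
  have hf0 : Tendsto (fun n => f (x n)) U (𝓝 0) := by
    have := heval f
    rw [← hΦap, hΦ0] at this
    simpa using this
  have hev : ∀ᶠ n in (U : Filter ℕ), ‖f (x n)‖ < ε := by
    have := hf0.norm
    simp only [norm_zero] at this
    exact this.eventually_lt_const hεpos |>.mono fun n h => by simpa using h
  have hevS : ∀ᶠ n in (U : Filter ℕ), ε ≤ ‖f (x n)‖ := eventually_of_mem hUS fun n hn => hn
  obtain ⟨n, h1, h2⟩ := (hev.and hevS).exists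
  linarith

/-- For a bounded operator `T : X → Y` between complex Banach spaces, the second adjoint
`T**` has trivial kernel if and only if every bounded sequence `(xₙ)` in `X` with
`‖T xₙ‖ → 0` converges weakly to `0`. -/
theorem ker_bidual_trivial_iff
    (X Y : Type*) [NormedAddCommGroup X] [NormedSpace ℂ X] [CompleteSpace X]
    [NormedAddCommGroup Y] [NormedSpace ℂ Y] [CompleteSpace Y]
    (T : X →L[ℂ] Y) :
    LinearMap.ker (bidualOp T).toLinearMap = ⊥ ↔
      ∀ x : ℕ → X, (∃ C : ℝ, ∀ n, ‖x n‖ ≤ C) →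
        Tendsto (fun n => ‖T (x n)‖) atTop (𝓝 0) →
        ∀ f : StrongDual ℂ X, Tendsto (fun n => f (x n)) atTop (𝓝 (0 : ℂ)) := by
  constructor
  · exact fun hker x hC hTx f => forward_dir T hker x hC hTx f
  · exact backward_dir T
end

section
/- Suppose Y is a Grothendieck space and T : X → Y is a bounded linear operator between Banach spaces such that the adjoint T* : Y* → X* is one-to-one. Then the third adjoint T*** : X*** → Y*** is one-to-one. -/
set_option synthInstance.maxHeartbeats 1000000
set_option maxHeartbeats 1000000

open NormedSpace Filter Topology

/-- A Banach space `Y` is a Grothendieck space if every weak*-null sequence in `Y*` is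
weakly null. -/
def IsGrothendieckSpace (Y : Type*) [NormedAddCommGroup Y] [NormedSpace ℂ Y] : Prop :=
  ∀ f : ℕ → StrongDual ℂ Y,
    (∀ y : Y, Tendsto (fun n => f n y) atTop (𝓝 (0 : ℂ))) →
    ∀ Φ : StrongDual ℂ (StrongDual ℂ Y), Tendsto (fun n => Φ (f n)) atTop (𝓝 (0 : ℂ))

namespace ThirdAdjointAux

variable {X Y : Type*} [NormedAddCommGroup X] [NormedSpace ℂ X]
    [NormedAddCommGroup Y] [NormedSpace ℂ Y]

/-- Dual of a normed space, with the normed instances. -/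
abbrev DualN (W : Type*) [NormedAddCommGroup W] [NormedSpace ℂ W] := StrongDual ℂ W

lemma dualOp_apply (T : X →L[ℂ] Y) (g : StrongDual ℂ Y) (x : X) : dualOp T g x = g (T x) := rfl

lemma bidualOp_apply (T : X →L[ℂ] Y) (Ψ : StrongDual ℂ (StrongDual ℂ X)) (f : StrongDual ℂ Y) :
    bidualOp T Ψ f = Ψ (dualOp T f) := rfl

/-- Phase rotation: realize almost the norm of a functional as a real part. -/
lemma exists_re_lt {Z : Type*} [NormedAddCommGroup Z] [NormedSpace ℂ Z]
    (h : Z →L[ℂ] ℂ) {r : ℝ} (hr : r < ‖h‖) (hr0 : 0 ≤ r) :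
    ∃ f : Z, ‖f‖ ≤ 1 ∧ r < (h f).re := by
  obtain ⟨f, hf1, hfr⟩ := h.exists_lt_apply_of_lt_opNorm hr
  have hne : h f ≠ 0 := by
    intro e
    rw [e, norm_zero] at hfr
    linarith
  refine ⟨((‖h f‖ : ℂ) / h f) • f, ?_, ?_⟩
  · have hnorm : ‖((‖h f‖ : ℂ) / h f)‖ = 1 := by
      rw [norm_div, Complex.norm_real, Real.norm_eq_abs, abs_of_nonneg (norm_nonneg _)]
      exact div_self (norm_ne_zero_iff.mpr hne)
    rw [norm_smul, hnorm, one_mul]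
    exact hf1.le
  · have : h (((‖h f‖ : ℂ) / h f) • f) = (‖h f‖ : ℂ) := by
      rw [map_smul, smul_eq_mul, div_mul_cancel₀ _ hne]
    rw [this, Complex.ofReal_re]
    exact hfr

/-- Representation of a real-linear functional on `ℂ × ℂ` as the real part of a
complex-linear one. -/
lemma repr_u (u : (ℂ × ℂ) →L[ℝ] ℝ) (z w : ℂ) :
    u (z, w) = (((u (1, 0) : ℂ) - Complex.I * (u (Complex.I, 0) : ℂ)) * z
      + ((u (0, 1) : ℂ) - Complex.I * (u (0, Complex.I) : ℂ)) * w).re := by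
  have hz : (z, w) = z.re • ((1 : ℂ), (0 : ℂ)) + z.im • (Complex.I, (0 : ℂ))
      + w.re • ((0 : ℂ), (1 : ℂ)) + w.im • ((0 : ℂ), Complex.I) := by
    simp only [Prod.smul_mk, Prod.mk_add_mk, Prod.mk.injEq]
    constructor <;> simp [Complex.real_smul, Complex.ext_iff]
  rw [hz, map_add, map_add, map_add, map_smul, map_smul, map_smul, map_smul]
  simp only [smul_eq_mul, Complex.add_re, Complex.mul_re, Complex.sub_re, Complex.sub_im,
    Complex.mul_im, Complex.I_re, Complex.I_im, Complex.ofReal_re, Complex.ofReal_im]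
  ring

/-- Helly-type lemma: a functional `Λ` on a bidual can be approximated on two functionals
by an element of a ball of radius `> ‖Λ‖`. -/
lemma helly2 {Z : Type*} [NormedAddCommGroup Z] [NormedSpace ℂ Z]
    (Λ : StrongDual ℂ (StrongDual ℂ Z)) (Φ Ξ : StrongDual ℂ Z) {K ε : ℝ} (hK : ‖Λ‖ < K) (hε : 0 < ε) :
    ∃ f : Z, ‖f‖ ≤ K ∧ ‖Φ f - Λ Φ‖ < ε ∧ ‖Ξ f - Λ Ξ‖ < ε := by
  have hK0 : (0 : ℝ) < K := lt_of_le_of_lt (norm_nonneg Λ) hK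
  set s : Set (ℂ × ℂ) := (fun f : Z => (Φ f, Ξ f)) '' Metric.closedBall 0 K with hs
  have hmem : (Λ Φ, Λ Ξ) ∈ closure s := by
    by_contra hp
    have hconv : Convex ℝ s := by
      refine (convex_closedBall (0 : Z) K).is_linear_image ⟨fun a b => ?_, fun c a => ?_⟩
      · simp [Prod.ext_iff]
      · simp [Prod.ext_iff, Prod.smul_mk]
    obtain ⟨u, c, hu1, hu2⟩ :=
      geometric_hahn_banach_closed_point hconv.closure isClosed_closure hp
    set a : ℂ := (u (1, 0) : ℂ) - Complex.I * (u (Complex.I, 0) : ℂ) with ha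
    set b : ℂ := (u (0, 1) : ℂ) - Complex.I * (u (0, Complex.I) : ℂ) with hb
    set h : StrongDual ℂ Z := a • Φ + b • Ξ with hh
    have hrepr : ∀ f : Z, (h f).re = u (Φ f, Ξ f) := by
      intro f
      rw [repr_u u (Φ f) (Ξ f)]
      simp [hh, ha, hb]
    have hΛh : (Λ h).re = u (Λ Φ, Λ Ξ) := by
      have : Λ h = a * Λ Φ + b * Λ Ξ := by
        simp [hh, map_add, map_smul, smul_eq_mul]
      rw [this, repr_u u (Λ Φ) (Λ Ξ)]
    have hlt : ∀ f : Z, ‖f‖ ≤ K → (h f).re < c := by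
      intro f hf
      rw [hrepr]
      exact hu1 _ (subset_closure ⟨f, by simpa [Metric.mem_closedBall, dist_zero_right] using hf,
        rfl⟩)
    have hcp : c < (Λ h).re := by rw [hΛh]; exact hu2
    by_cases hh0 : h = 0
    · have h1 : (Λ h).re = 0 := by rw [hh0, map_zero, Complex.zero_re]
      have h2 : (0:ℝ) < c := by
        have := hlt 0 (by simp [hK0.le])
        simpa using this
      linarith
    · have hKh : K * ‖h‖ ≤ c := by
        by_contra hcK
        push_neg at hcK
        have hdiv : c / K < ‖h‖ := (div_lt_iff₀ hK0).2 (by linarith [mul_comm K ‖h‖])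
        have hnp : 0 < ‖h‖ := norm_pos_iff.mpr hh0
        have hrlt : max (c / K) 0 < ‖h‖ := max_lt hdiv hnp
        obtain ⟨f, hf1, hfr⟩ := exists_re_lt h hrlt (le_max_right _ _)
        have hKf : ‖(K : ℝ) • f‖ ≤ K := by
          rw [norm_smul, Real.norm_eq_abs, abs_of_nonneg hK0.le]
          nlinarith [norm_nonneg f]
        have := hlt ((K : ℝ) • f) hKf
        have hre : (h ((K : ℝ) • f)).re = K * (h f).re := by
          rw [ContinuousLinearMap.map_smul_of_tower, Complex.smul_re, smul_eq_mul]
        rw [hre] at this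
        have h5 : c / K < (h f).re := lt_of_le_of_lt (le_max_left _ _) hfr
        have h6 : c < (h f).re * K := (div_lt_iff₀ hK0).mp h5
        rw [mul_comm] at this
        linarith
      have h3 : (Λ h).re ≤ ‖Λ‖ * ‖h‖ := by
        calc (Λ h).re ≤ ‖Λ h‖ := Complex.re_le_norm _
          _ = ‖Λ h‖ := rfl
          _ ≤ ‖Λ‖ * ‖h‖ := Λ.le_opNorm h
      have hnp : 0 < ‖h‖ := norm_pos_iff.mpr hh0
      nlinarith
  rw [Metric.mem_closure_iff] at hmem
  obtain ⟨q, ⟨f, hf, rfl⟩, hd⟩ := hmem ε hε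
  rw [Prod.dist_eq, max_lt_iff] at hd
  refine ⟨f, by simpa [Metric.mem_closedBall, dist_zero_right] using hf, ?_, ?_⟩
  · rw [← dist_eq_norm, dist_comm]
    exact hd.1
  · rw [← dist_eq_norm, dist_comm]
    exact hd.2

end ThirdAdjointAux
namespace ThirdAdjointAux

variable {X Y : Type*} [NormedAddCommGroup X] [NormedSpace ℂ X]
    [NormedAddCommGroup Y] [NormedSpace ℂ Y]

lemma denseRange_of_dual_injective (T : X →L[ℂ] Y)
    (hinj : Function.Injective (dualOp T)) : DenseRange T := by
  rw [DenseRange, dense_iff_closure_eq]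
  by_contra hne
  obtain ⟨y, hy⟩ : ∃ y : Y, y ∉ closure (Set.range T) := by
    by_contra hcon
    push_neg at hcon
    exact hne (Set.eq_univ_of_forall hcon)
  set M : Submodule ℂ Y := (LinearMap.range (T : X →ₗ[ℂ] Y)).topologicalClosure with hM
  have hMcoe : (M : Set Y) = closure (Set.range T) := by
    simp only [hM, Submodule.topologicalClosure_coe]
    congr 1
  have hyM : y ∉ (M : Set Y) := by rw [hMcoe]; exact hy
  have hconv : Convex ℝ (M : Set Y) := by
    have := (M.restrictScalars ℝ).convex
    simpa using this
  obtain ⟨u, c, hu1, hu2⟩ :=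
    geometric_hahn_banach_closed_point hconv (LinearMap.range (T : X →ₗ[ℂ] Y)).isClosed_topologicalClosure hyM
  have huM : ∀ m ∈ (M : Set Y), u m = 0 := by
    intro m hm
    by_contra h0
    have hmem : ((c + 1) / u m) • m ∈ (M : Set Y) := by
      exact (M.restrictScalars ℝ).smul_mem _ hm
    have := hu1 _ hmem
    rw [map_smul, smul_eq_mul, div_mul_cancel₀ _ h0] at this
    linarith
  have hc0 : 0 < c := by
    have := hu1 0 M.zero_mem
    simpa using this
  set g : Y →L[ℂ] ℂ := StrongDual.extendRCLike u with hg
  have hgM : ∀ m ∈ (M : Set Y), g m = 0 := by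
    intro m hm
    rw [hg, StrongDual.extendRCLike_apply]
    have h1 : u m = 0 := huM m hm
    have h2 : u ((RCLike.I : ℂ) • m) = 0 := huM _ (M.smul_mem _ hm)
    simp only [h1, h2, RCLike.ofReal_zero, mul_zero, sub_zero]
  have hgT : dualOp T g = 0 := by
    ext x
    have : T x ∈ (M : Set Y) := by
      rw [hMcoe]
      exact subset_closure ⟨x, rfl⟩
    simpa [dualOp_apply] using hgM _ this
  have : g = 0 := hinj (by rw [hgT, map_zero])
  have hre : u y = 0 := by
    have h1 : (g y).re = u y := by
      rw [hg, StrongDual.extendRCLike_apply]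
      simp [Complex.sub_re, Complex.mul_re]
    rw [this] at h1
    simpa using h1.symm
  linarith

end ThirdAdjointAux
namespace ThirdAdjointAux

variable {X Y : Type*} [NormedAddCommGroup X] [NormedSpace ℂ X]
    [NormedAddCommGroup Y] [NormedSpace ℂ Y]

lemma core (hY : IsGrothendieckSpace Y) (T : X →L[ℂ] Y)
    (hinj : Function.Injective (dualOp T))
    (Λ : DualN (StrongDual ℂ (StrongDual ℂ Y))) (Φ : StrongDual ℂ (StrongDual ℂ Y))
    (hΛ : ∀ Ψ : StrongDual ℂ (StrongDual ℂ X), Λ (bidualOp T Ψ) = 0)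
    (hΦ : Λ Φ = 1) : False := by
  set K : ℝ := ‖Λ‖ + 1 with hKdef
  have hK : ‖Λ‖ < K := by simp [hKdef]
  have hK0 : (0 : ℝ) < K := lt_of_le_of_lt (norm_nonneg Λ) hK
  have step : ∀ ε : ℝ, 0 < ε →
      ∃ f : StrongDual ℂ Y, ‖f‖ ≤ K ∧ 1/2 ≤ (Φ f).re ∧ ‖dualOp T f‖ < ε := by
    intro ε hε
    by_contra hcon
    push_neg at hcon
    set A : Set (StrongDual ℂ Y) := Metric.closedBall 0 K ∩ {f | 1/2 ≤ (Φ f).re} with hA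
    have hAconv : Convex ℝ A := by
      refine (convex_closedBall _ _).inter (convex_halfSpace_ge ⟨fun a b => ?_, fun r a => ?_⟩ _)
      · simp [Complex.add_re]
      · rw [ContinuousLinearMap.map_smul_of_tower, Complex.smul_re, smul_eq_mul]
    have himg : Convex ℝ (dualOp T '' A) := by
      refine hAconv.is_linear_image ⟨fun a b => map_add _ a b,
        fun r a => ContinuousLinearMap.map_smul_of_tower _ _ _⟩
    have hC0 : (0 : StrongDual ℂ X) ∉ closure (dualOp T '' A) := by
      intro h0
      have hsub : closure (dualOp T '' A) ⊆ {g : StrongDual ℂ X | ε ≤ ‖g‖} := by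
        apply closure_minimal
        · rintro g ⟨f, ⟨hf1, hf2⟩, rfl⟩
          exact hcon f (by simpa [Metric.mem_closedBall, dist_zero_right] using hf1) hf2
        · exact isClosed_le continuous_const continuous_norm
      have := hsub h0
      simp only [Set.mem_setOf_eq, norm_zero] at this
      linarith
    obtain ⟨u, c, hu1, hu2⟩ :=
      geometric_hahn_banach_closed_point himg.closure isClosed_closure hC0
    have hc0 : c < 0 := by simpa using hu2
    set Ψ : StrongDual ℂ (StrongDual ℂ X) := StrongDual.extendRCLike (-u) with hΨ
    have hΨre : ∀ g : StrongDual ℂ X, (Ψ g).re = -(u g) := by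
      intro g
      rw [hΨ, StrongDual.extendRCLike_apply]
      simp [Complex.sub_re, Complex.mul_re]
    set Ξ : StrongDual ℂ (StrongDual ℂ Y) := bidualOp T Ψ with hΞ
    have hΞre : ∀ f ∈ A, -c < (Ξ f).re := by
      intro f hf
      have hmem : dualOp T f ∈ closure (dualOp T '' A) := subset_closure ⟨f, hf, rfl⟩
      have h1 := hu1 _ hmem
      have h2 : (Ξ f).re = -(u (dualOp T f)) := hΨre (dualOp T f)
      linarith
    have hΛΞ : Λ Ξ = 0 := hΛ Ψ
    have hεm : (0 : ℝ) < min (1/4) (-c) := lt_min (by norm_num) (by linarith)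
    obtain ⟨f, hfK, hfΦ, hfΞ⟩ := helly2 Λ Φ Ξ hK hεm
    rw [hΦ] at hfΦ
    rw [hΛΞ] at hfΞ
    have h1 : 1/2 ≤ (Φ f).re := by
      have ha : ‖Φ f - 1‖ < 1/4 := lt_of_lt_of_le hfΦ (min_le_left _ _)
      have hb : |(Φ f).re - 1| ≤ ‖Φ f - 1‖ := by
        have := Complex.abs_re_le_norm (Φ f - 1)
        simpa [Complex.sub_re, Complex.one_re] using this
      have := abs_le.mp (le_of_lt (lt_of_le_of_lt hb ha))
      linarith [this.1]
    have h2 : f ∈ A := by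
      refine ⟨?_, h1⟩
      simpa [Metric.mem_closedBall, dist_zero_right] using hfK
    have h3 : (Ξ f).re ≤ ‖Ξ f‖ := Complex.re_le_norm _
    have h4 : ‖Ξ f‖ < -c := by
      have := lt_of_lt_of_le hfΞ (min_le_right _ _)
      simpa using this
    have := hΞre f h2
    linarith
  have hdr : DenseRange T := denseRange_of_dual_injective T hinj
  choose f hf1 hf2 hf3 using fun n : ℕ => step (1 / (n + 1)) (by positivity)
  have hnull : ∀ yy : Y, Tendsto (fun n => f n yy) atTop (𝓝 (0 : ℂ)) := by
    intro yy
    rw [NormedAddCommGroup.tendsto_nhds_zero]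
    intro δ hδ
    obtain ⟨x, hx⟩ := hdr.exists_dist_lt yy (by positivity : (0:ℝ) < δ / (2 * K))
    rw [dist_eq_norm] at hx
    obtain ⟨N, hN⟩ := exists_nat_gt (2 * ‖x‖ / δ)
    have hN1 : (1 : ℝ) ≤ N := by
      have hNpos : (0:ℝ) < N := lt_of_le_of_lt (by positivity) hN
      have : 0 < N := by exact_mod_cast hNpos
      exact_mod_cast this
    rw [eventually_atTop]
    refine ⟨N, fun n hn => ?_⟩
    have key : f n yy = f n (yy - T x) + dualOp T (f n) x := by
      rw [dualOp_apply, ← map_add]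
      congr 1
      abel
    have e1 : ‖f n (yy - T x)‖ ≤ K * (δ / (2 * K)) := by
      calc ‖f n (yy - T x)‖ ≤ ‖f n‖ * ‖yy - T x‖ := (f n).le_opNorm _
        _ ≤ K * (δ / (2 * K)) := by
          apply mul_le_mul (hf1 n) hx.le (norm_nonneg _) hK0.le
    have e2 : ‖dualOp T (f n) x‖ ≤ ‖dualOp T (f n)‖ * ‖x‖ := (dualOp T (f n)).le_opNorm _
    have e3 : ‖dualOp T (f n)‖ * ‖x‖ < δ / 2 := by
      have hb : ‖dualOp T (f n)‖ < 1 / (n + 1) := hf3 n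
      have hnn : (N : ℝ) ≤ (n : ℝ) + 1 := by
        have : (N : ℝ) ≤ (n : ℝ) := by exact_mod_cast hn
        linarith
      have hx1 : ‖x‖ / ((n : ℝ) + 1) ≤ ‖x‖ / N := by
        apply div_le_div_of_nonneg_left (norm_nonneg x) (by linarith) hnn
      have hx2 : ‖x‖ / (N : ℝ) < δ / 2 := by
        rw [div_lt_iff₀ (by linarith : (0:ℝ) < (N:ℝ))]
        have := (div_lt_iff₀ hδ).mp hN
        nlinarith
      calc ‖dualOp T (f n)‖ * ‖x‖ ≤ (1 / ((n:ℝ) + 1)) * ‖x‖ := by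
            apply mul_le_mul_of_nonneg_right hb.le (norm_nonneg x)
        _ = ‖x‖ / ((n:ℝ)+1) := by ring
        _ ≤ ‖x‖ / N := hx1
        _ < δ / 2 := hx2
    have : ‖f n yy‖ ≤ ‖f n (yy - T x)‖ + ‖dualOp T (f n) x‖ := by
      rw [key]; exact norm_add_le _ _
    have hKd : K * (δ / (2 * K)) = δ / 2 := by
      field_simp
    linarith
  have htend := hY f hnull Φ
  rw [NormedAddCommGroup.tendsto_nhds_zero] at htend
  obtain ⟨N, hN⟩ := eventually_atTop.mp (htend (1/2) (by norm_num))
  have h5 := hN N le_rfl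
  have h6 : (1:ℝ)/2 ≤ ‖Φ (f N)‖ := le_trans (hf2 N) (Complex.re_le_norm _)
  linarith

end ThirdAdjointAux

/-- If `Y` is a Grothendieck space and `T : X → Y` is a bounded operator between complex
Banach spaces whose adjoint `T* : Y* → X*` is one-to-one, then the third adjoint
`T*** = (T**)*` is one-to-one. -/
theorem third_adjoint_injective_of_grothendieck
    (X Y : Type*) [NormedAddCommGroup X] [NormedSpace ℂ X] [CompleteSpace X]
    [NormedAddCommGroup Y] [NormedSpace ℂ Y] [CompleteSpace Y]
    (hY : IsGrothendieckSpace Y) (T : X →L[ℂ] Y)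
    (hinj : Function.Injective (dualOp T)) :
    Function.Injective
      (dualOp (X := StrongDual ℂ (StrongDual ℂ X)) (Y := StrongDual ℂ (StrongDual ℂ Y)) (bidualOp T)) := by
  have key : ∀ Λ : ThirdAdjointAux.DualN (StrongDual ℂ (StrongDual ℂ Y)),
      dualOp (X := StrongDual ℂ (StrongDual ℂ X)) (Y := StrongDual ℂ (StrongDual ℂ Y)) (bidualOp T) Λ = 0 → Λ = 0 := by
    intro Λ hΛ0
    refine ContinuousLinearMap.ext fun Φ => ?_
    rw [ContinuousLinearMap.zero_apply]
    by_contra hc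
    have hzero : ∀ Ψ : StrongDual ℂ (StrongDual ℂ X), Λ (bidualOp T Ψ) = 0 := by
      intro Ψ
      have h0 := ContinuousLinearMap.ext_iff.mp hΛ0 Ψ
      rw [ContinuousLinearMap.zero_apply] at h0
      exact h0
    have hΛ' : ∀ Ψ : StrongDual ℂ (StrongDual ℂ X), ((Λ Φ)⁻¹ • Λ) (bidualOp T Ψ) = 0 := by
      intro Ψ
      simp [ContinuousLinearMap.smul_apply, hzero Ψ]
    exact ThirdAdjointAux.core hY T hinj ((Λ Φ)⁻¹ • Λ) Φ hΛ'
      (by simp [ContinuousLinearMap.smul_apply, inv_mul_cancel₀ hc])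
  intro Λ₁ Λ₂ h
  have hsub : dualOp (X := StrongDual ℂ (StrongDual ℂ X)) (Y := StrongDual ℂ (StrongDual ℂ Y)) (bidualOp T) (Λ₁ - Λ₂) = 0 := by
    rw [map_sub, h, sub_self]
  have := key _ hsub
  exact sub_eq_zero.mp this
end

section
/- (Topologically transitive criterion) Let T be a bounded linear operator on a complex Banach space X (not necessarily separable). Suppose there exists a strictly increasing sequence of positive integers (n_k) for which there are: (1) a dense subset X₀ ⊆ X such that T^{n_k} x → 0 for every x ∈ X₀; (2) a dense subset Y₀ ⊆ X and a sequence of mappings S_k : Y₀ → X such that (a) S_k y → 0 for every y ∈ Y₀ and (b) T^{n_k} S_k y → y for every y ∈ Y₀. Then T is topologically transitive. -/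
/-!
Pick `x ∈ X₀ ∩ U` and `y ∈ Y₀ ∩ V`. The points `x + S_k y` tend to `x`, while by additivity
`T^{n_k} (x + S_k y) = T^{n_k} x + T^{n_k} S_k y` tends to `0 + y`; so for large `k` the point
`x + S_k y` lies in `U` and its image under `T^{n_k}` lies in `V`.
-/

open Filter Topology

def TopologicallyTransitive {X : Type*} [NormedAddCommGroup X] [NormedSpace ℂ X]
    (T : X →L[ℂ] X) : Prop :=
  ∀ U V : Set X, IsOpen U → IsOpen V → U.Nonempty → V.Nonempty →
    ∃ n : ℕ, 0 < n ∧ ((T ^ n) '' U ∩ V).Nonempty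

theorem Filter.Tendsto.exists_image_inter_nonempty {ι α β : Type*} [TopologicalSpace α]
    [TopologicalSpace β] {l : Filter ι} [l.NeBot] {f : ι → α → β} {u : ι → α} {a : α} {b : β}
    {U : Set α} {V : Set β} (hU : U ∈ 𝓝 a) (hV : V ∈ 𝓝 b) (hu : Tendsto u l (𝓝 a))
    (hfu : Tendsto (fun i => f i (u i)) l (𝓝 b)) : ∃ i, (f i '' U ∩ V).Nonempty := by
  obtain ⟨i, hiU, hiV⟩ := ((hu.eventually_mem hU).and (hfu.eventually_mem hV)).exists
  exact ⟨i, f i (u i), Set.mem_image_of_mem _ hiU, hiV⟩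

section Criterion

variable {M F ι : Type*} [AddMonoid M] [TopologicalSpace M] [ContinuousAdd M]
  [FunLike F M M] [AddMonoidHomClass F M M] {l : Filter ι}

theorem tendsto_add_and_tendsto_map_add {A : ι → F} {x y : M} {s : ι → M}
    (hx : Tendsto (fun i => A i x) l (𝓝 0)) (hs : Tendsto s l (𝓝 0))
    (hAs : Tendsto (fun i => A i (s i)) l (𝓝 y)) :
    Tendsto (fun i => x + s i) l (𝓝 x) ∧ Tendsto (fun i => A i (x + s i)) l (𝓝 y) := by
  constructor
  · simpa only [add_zero] using tendsto_const_nhds.add hs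
  · simpa only [map_add, zero_add] using hx.add hAs

theorem exists_image_inter_nonempty_of_dense_tendsto [l.NeBot] (A : ι → F)
    {X₀ Y₀ : Set M} (hX₀ : Dense X₀) (hX₀lim : ∀ x ∈ X₀, Tendsto (fun i => A i x) l (𝓝 0))
    (hY₀ : Dense Y₀) (S : ι → Y₀ → M) (hSlim : ∀ y : Y₀, Tendsto (fun i => S i y) l (𝓝 0))
    (hAS : ∀ y : Y₀, Tendsto (fun i => A i (S i y)) l (𝓝 (y : M)))
    {U V : Set M} (hU : IsOpen U) (hV : IsOpen V) (hUne : U.Nonempty) (hVne : V.Nonempty) :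
    ∃ i, (A i '' U ∩ V).Nonempty := by
  obtain ⟨x, hxX₀, hxU⟩ := hX₀.exists_mem_open hU hUne
  obtain ⟨y, hyY₀, hyV⟩ := hY₀.exists_mem_open hV hVne
  obtain ⟨hlim, hAlim⟩ :=
    tendsto_add_and_tendsto_map_add (hX₀lim x hxX₀) (hSlim ⟨y, hyY₀⟩) (hAS ⟨y, hyY₀⟩)
  exact hlim.exists_image_inter_nonempty (hU.mem_nhds hxU) (hV.mem_nhds hyV) hAlim

end Criterion

theorem topologicallyTransitive_of_criterion_general
    (X : Type*) [NormedAddCommGroup X] [NormedSpace ℂ X]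
    (T : X →L[ℂ] X)
    (n : ℕ → ℕ) (hpos : ∀ k, 0 < n k)
    (X₀ : Set X) (hX₀ : Dense X₀)
    (hX₀lim : ∀ x ∈ X₀, Tendsto (fun k => (T ^ n k) x) atTop (𝓝 0))
    (Y₀ : Set X) (hY₀ : Dense Y₀)
    (S : ℕ → Y₀ → X)
    (hSlim : ∀ y : Y₀, Tendsto (fun k => S k y) atTop (𝓝 0))
    (hTS : ∀ y : Y₀, Tendsto (fun k => (T ^ n k) (S k y)) atTop (𝓝 (y : X))) :
    TopologicallyTransitive T := by
  intro U V hU hV hUne hVne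
  obtain ⟨k, hk⟩ := exists_image_inter_nonempty_of_dense_tendsto (fun k => T ^ n k)
    hX₀ hX₀lim hY₀ S hSlim hTS hU hV hUne hVne
  exact ⟨n k, hpos k, hk⟩

/-- **Topologically transitive criterion.**  Let `T` be a bounded linear operator on a complex
Banach space `X` (not necessarily separable).  Suppose there is a strictly increasing sequence
of positive integers `(n_k)` for which there are: (1) a dense subset `X₀ ⊆ X` with
`T^{n_k} x → 0` for every `x ∈ X₀`; (2) a dense subset `Y₀ ⊆ X` and maps `S_k : Y₀ → X` with
`S_k y → 0` and `T^{n_k} (S_k y) → y` for every `y ∈ Y₀`.  Then `T` is topologically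
transitive. -/
theorem topologicallyTransitive_of_criterion
    (X : Type*) [NormedAddCommGroup X] [NormedSpace ℂ X] [CompleteSpace X]
    (T : X →L[ℂ] X)
    (n : ℕ → ℕ) (hpos : ∀ k, 0 < n k) (hmono : StrictMono n)
    (X₀ : Set X) (hX₀ : Dense X₀)
    (hX₀lim : ∀ x ∈ X₀, Tendsto (fun k => (T ^ n k) x) atTop (𝓝 0))
    (Y₀ : Set X) (hY₀ : Dense Y₀)
    (S : ℕ → Y₀ → X)
    (hSlim : ∀ y : Y₀, Tendsto (fun k => S k y) atTop (𝓝 0))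
    (hTS : ∀ y : Y₀, Tendsto (fun k => (T ^ n k) (S k y)) atTop (𝓝 (y : X))) :
    TopologicallyTransitive T :=
  topologicallyTransitive_of_criterion_general X T n hpos X₀ hX₀ hX₀lim Y₀ hY₀ S hSlim hTS
end

section
/- Let X be any complex Hilbert space and let H = ℓ²(ℕ, X) be the Hilbert space of square-summable X-valued sequences. Then the operator T on H defined by T(x₁, x₂, x₃, …) = 2(x₂, x₃, x₄, …) (twice the backward shift) is topologically transitive. -/
/-! The shift `T x = w • (x₁, x₂, …)` with `1 < ‖w‖` kills every finitely supported sequence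
after finitely many steps, and `R = w⁻¹ • (forward shift)` is a right inverse of `T` contracting
norms by the factor `‖w‖⁻¹`. Given nonempty open `U, V`, pick a finitely supported `u ∈ U` and any
`v ∈ V`: for large `n`, `u + Rⁿ v` lies in `U` and `Tⁿ (u + Rⁿ v) = v`. -/

open Filter Topology
open scoped ENNReal

theorem norm_iterate_le_of_norm_le {α : Type*} [Norm α] {R : α → α} {c : ℝ} (hc₀ : 0 ≤ c)
    (hR : ∀ x, ‖R x‖ ≤ c * ‖x‖) (n : ℕ) (x : α) : ‖R^[n] x‖ ≤ c ^ n * ‖x‖ := by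
  induction n with
  | zero => simp
  | succ n ih =>
    rw [Function.iterate_succ_apply', pow_succ', mul_assoc]
    exact (hR _).trans (mul_le_mul_of_nonneg_left ih hc₀)

theorem TopologicallyTransitive.of_dense_eventually_zero_of_rightInverse
    {E : Type*} [NormedAddCommGroup E] [NormedSpace ℂ E] {T : E →L[ℂ] E}
    (hD : Dense {x | ∀ᶠ n in atTop, (T ^ n) x = 0}) {R : E → E} (hRT : Function.RightInverse R T)
    {c : ℝ} (hc₀ : 0 ≤ c) (hc : c < 1) (hR : ∀ x, ‖R x‖ ≤ c * ‖x‖) :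
    TopologicallyTransitive T := by
  intro U V hU _ hUne ⟨v, hv⟩
  obtain ⟨u, hu0, huU⟩ := hD.exists_mem_open hU hUne
  have hRv : Tendsto (fun n => R^[n] v) atTop (𝓝 0) :=
    squeeze_zero_norm (norm_iterate_le_of_norm_le hc₀ hR · v)
      (by simpa using (tendsto_pow_atTop_nhds_zero_of_lt_one hc₀ hc).mul_const ‖v‖)
  have hmem : ∀ᶠ n in atTop, u + R^[n] v ∈ U :=
    (by simpa using tendsto_const_nhds.add hRv : Tendsto (fun n => u + R^[n] v) atTop (𝓝 u))
      |>.eventually (hU.mem_nhds huU)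
  obtain ⟨n, hn, hnU, hnu⟩ := ((eventually_gt_atTop 0).and (hmem.and hu0)).exists
  refine ⟨n, hn, v, ⟨u + R^[n] v, hnU, ?_⟩, hv⟩
  rw [map_add, hnu, zero_add, FunLike.coe_pow_eq_iterate]
  exact hRT.iterate n v

namespace lp

variable {X : Type*} [NormedAddCommGroup X] {p : ℝ≥0∞}

theorem memℓp_cons_zero (hp : 0 < p.toReal) (x : lp (fun _ : ℕ => X) p) :
    Memℓp (fun | 0 => 0 | j + 1 => x j : ℕ → X) p := by
  rw [memℓp_gen_iff hp, ← summable_nat_add_iff 1]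
  exact (lp.hasSum_norm hp x).summable

def shiftRight (hp : 0 < p.toReal) (x : lp (fun _ : ℕ => X) p) : lp (fun _ : ℕ => X) p :=
  ⟨fun | 0 => 0 | j + 1 => x j, memℓp_cons_zero hp x⟩

theorem norm_shiftRight (hp : 0 < p.toReal) (x : lp (fun _ : ℕ => X) p) :
    ‖shiftRight hp x‖ = ‖x‖ := by
  rw [norm_eq_tsum_rpow hp, norm_eq_tsum_rpow hp,
    (lp.hasSum_norm hp (shiftRight hp x)).summable.tsum_eq_zero_add]
  simp [shiftRight, Real.zero_rpow hp.ne']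

end lp

section ScaledBackwardShift

variable {X : Type*} [NormedAddCommGroup X] [NormedSpace ℂ X] {p : ℝ≥0∞} [Fact (1 ≤ p)] {w : ℂ}
  {T : lp (fun _ : ℕ => X) p →L[ℂ] lp (fun _ : ℕ => X) p}

variable (w T) in
def IsScaledBackwardShift : Prop :=
  ∀ x n, (T x : ℕ → X) n = w • (x : ℕ → X) (n + 1)

namespace IsScaledBackwardShift

protected theorem pow_apply (hT : IsScaledBackwardShift w T) (k : ℕ)
    (x : lp (fun _ : ℕ => X) p) (j : ℕ) :
    ((T ^ k) x : ℕ → X) j = w ^ k • (x : ℕ → X) (j + k) := by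
  induction k generalizing x with
  | zero => simp
  | succ k ih => rw [pow_succ, mul_apply_eq_comp, ih, hT, smul_smul, ← pow_succ]; rfl

theorem eventually_pow_apply_eq_zero (hT : IsScaledBackwardShift w T) {x : lp (fun _ : ℕ => X) p}
    {N : ℕ} (hx : ∀ j, N ≤ j → (x : ℕ → X) j = 0) : ∀ᶠ k in atTop, (T ^ k) x = 0 := by
  filter_upwards [eventually_ge_atTop N] with k hk
  ext j
  rw [hT.pow_apply, hx _ (by omega), smul_zero]
  rfl

theorem dense_eventually_pow_apply_eq_zero (hT : IsScaledBackwardShift w T) (hp : p ≠ ∞) :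
    Dense {x | ∀ᶠ k in atTop, (T ^ k) x = 0} := by
  intro x
  refine mem_closure_of_tendsto (lp.hasSum_single hp x).tendsto_sum_nat
    (Eventually.of_forall fun N => hT.eventually_pow_apply_eq_zero (N := N) fun j hj => ?_)
  rw [lp.coeFn_sum, Finset.sum_apply]
  exact Finset.sum_eq_zero fun i hi => lp.single_apply_ne p i _ (by grind)

theorem rightInverse_smul_shiftRight (hT : IsScaledBackwardShift w T) (hp : 0 < p.toReal)
    (hw : w ≠ 0) : Function.RightInverse (fun x => w⁻¹ • lp.shiftRight hp x) T := by
  intro x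
  ext j
  rw [hT]
  simp [lp.shiftRight, smul_smul, hw]

protected theorem topologicallyTransitive (hT : IsScaledBackwardShift w T) (hp : p ≠ ∞)
    (hw : 1 < ‖w‖) : TopologicallyTransitive T := by
  have hp' : 0 < p.toReal := ENNReal.toReal_pos (zero_lt_one.trans_le Fact.out).ne' hp
  have hw₀ : w ≠ 0 := norm_pos_iff.mp (one_pos.trans hw)
  refine .of_dense_eventually_zero_of_rightInverse (hT.dense_eventually_pow_apply_eq_zero hp)
    (hT.rightInverse_smul_shiftRight hp' hw₀) (inv_nonneg.2 (norm_nonneg w))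
    (inv_lt_one_of_one_lt₀ hw) fun x => ?_
  rw [norm_smul, norm_inv, lp.norm_shiftRight]

end IsScaledBackwardShift

end ScaledBackwardShift

theorem twice_backward_shift_topologicallyTransitive_general
    (X : Type*) [NormedAddCommGroup X] [InnerProductSpace ℂ X]
    (T : lp (fun _ : ℕ => X) 2 →L[ℂ] lp (fun _ : ℕ => X) 2)
    (hT : ∀ (x : lp (fun _ : ℕ => X) 2) (n : ℕ),
      (T x : ∀ _ : ℕ, X) n = (2 : ℂ) • (x : ∀ _ : ℕ, X) (n + 1)) :
    TopologicallyTransitive T :=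
  IsScaledBackwardShift.topologicallyTransitive hT ENNReal.ofNat_ne_top (by norm_num)

/-- Let `X` be a complex Hilbert space and `H = ℓ²(ℕ, X)`.  Twice the backward shift on `H`,
i.e. the operator `T` with `(T x)ₙ = 2 xₙ₊₁`, is topologically transitive. -/
theorem twice_backward_shift_topologicallyTransitive
    (X : Type*) [NormedAddCommGroup X] [InnerProductSpace ℂ X] [CompleteSpace X]
    (T : lp (fun _ : ℕ => X) 2 →L[ℂ] lp (fun _ : ℕ => X) 2)
    (hT : ∀ (x : lp (fun _ : ℕ => X) 2) (n : ℕ),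
      (T x : ∀ _ : ℕ, X) n = (2 : ℂ) • (x : ∀ _ : ℕ, X) (n + 1)) :
    TopologicallyTransitive T :=
  twice_backward_shift_topologicallyTransitive_general X T hT
end

section
/- Let T be a bounded linear operator on a complex Banach space X. If T is topologically transitive, then the point spectrum σ_p(T*) of the adjoint operator T* is empty. -/
open NormedSpace

/-- If a bounded linear operator `T` on a complex Banach space is topologically transitive,
then the point spectrum of the adjoint `T*` is empty. -/
theorem pointSpectrum_adjoint_empty_of_topologicallyTransitive
    (X : Type*) [NormedAddCommGroup X] [NormedSpace ℂ X] [CompleteSpace X]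
    (T : X →L[ℂ] X) (hT : TopologicallyTransitive T) :
    ∀ μ : ℂ, ¬ ∃ f : StrongDual ℂ X, f ≠ 0 ∧ dualOp T f = μ • f := by
  intro μ
  rintro ⟨f, hf0, hf⟩
  -- f (T x) = μ * f x
  have hkey : ∀ x : X, f (T x) = μ * f x := by
    intro x
    have := congrArg (fun g : StrongDual ℂ X => g x) hf
    simpa [dualOp, ContinuousLinearMap.compL] using this
  have hiter : ∀ (n : ℕ) (x : X), f ((T ^ n) x) = μ ^ n * f x := by
    intro n
    induction n with
    | zero => intro x; simp
    | succ n ih =>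
      intro x
      have h1 : (T ^ (n + 1)) x = (T ^ n) (T x) := by
        rw [pow_succ]; rfl
      rw [h1, ih (T x), hkey x]
      ring
  -- pick x₀ with f x₀ ≠ 0, and a point where ‖f‖ = 2
  obtain ⟨x₀, hx₀⟩ : ∃ x, f x ≠ 0 := by
    by_contra h
    push_neg at h
    exact hf0 (ContinuousLinearMap.ext fun x => by simp [h x])
  set y : X := (2 / f x₀) • x₀ with hy
  have hfy : f y = 2 := by
    simp [hy, div_mul_cancel₀ _ hx₀]
  have hcont : Continuous fun x : X => ‖f x‖ := f.continuous.norm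
  have hUopen : IsOpen {x : X | ‖f x‖ < 1} := isOpen_lt hcont continuous_const
  have hVopen : IsOpen {x : X | 1 < ‖f x‖} := isOpen_lt continuous_const hcont
  have hUne : ({x : X | ‖f x‖ < 1}).Nonempty := ⟨0, by simp⟩
  have hVne : ({x : X | 1 < ‖f x‖}).Nonempty := ⟨y, by simp [hfy]⟩
  by_cases hμ : ‖μ‖ ≤ 1
  · obtain ⟨n, hn, z, ⟨x, hx, hxz⟩, hz⟩ :=
      hT _ _ hUopen hVopen hUne hVne
    have h1 : ‖f z‖ = ‖μ‖ ^ n * ‖f x‖ := by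
      rw [← hxz, hiter n x, norm_mul, norm_pow]
    have h2 : ‖μ‖ ^ n * ‖f x‖ < 1 := by
      calc ‖μ‖ ^ n * ‖f x‖ ≤ 1 * ‖f x‖ := by
            apply mul_le_mul_of_nonneg_right _ (norm_nonneg _)
            exact pow_le_one₀ (norm_nonneg _) hμ
        _ = ‖f x‖ := one_mul _
        _ < 1 := hx
    have : (1 : ℝ) < 1 := lt_trans (h1 ▸ hz) h2
    exact lt_irrefl _ this
  · push_neg at hμ
    obtain ⟨n, hn, z, ⟨x, hx, hxz⟩, hz⟩ :=
      hT _ _ hVopen hUopen hVne hUne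
    have h1 : ‖f z‖ = ‖μ‖ ^ n * ‖f x‖ := by
      rw [← hxz, hiter n x, norm_mul, norm_pow]
    have h2 : 1 < ‖μ‖ ^ n * ‖f x‖ := by
      have hμn : 1 < ‖μ‖ ^ n := one_lt_pow₀ hμ hn.ne'
      calc (1 : ℝ) < ‖μ‖ ^ n := hμn
        _ = ‖μ‖ ^ n * 1 := (mul_one _).symm
        _ ≤ ‖μ‖ ^ n * ‖f x‖ := by
            apply mul_le_mul_of_nonneg_left (le_of_lt hx)
            positivity
    have : (1 : ℝ) < 1 := lt_trans h2 (h1 ▸ hz)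
    exact lt_irrefl _ this
end

section
/- Let T be a bounded linear operator on the complex Banach space ℓ₁ of absolutely summable complex sequences. If λ ∈ ℂ is in the approximate point spectrum of T (i.e., there is a sequence (x_n) of unit vectors in ℓ₁ with ‖λ x_n − T x_n‖ → 0), then λ is an eigenvalue of the second adjoint T** : ℓ₁** → ℓ₁**. Consequently, the point spectrum σ_p(T**) is non-empty. -/
set_option synthInstance.maxHeartbeats 1000000
set_option maxHeartbeats 1000000

open NormedSpace Filter Topology

noncomputable abbrev L1 := lp (fun _ : ℕ => ℂ) 1

lemma l1_hasSum (v : L1) : HasSum (fun j => ‖v j‖) ‖v‖ := by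
  simpa using lp.hasSum_norm (p := 1) (by norm_num) v

lemma l1_summable (v : L1) : Summable (fun j => ‖v j‖) := (l1_hasSum v).summable

lemma l1_norm_eq (v : L1) : ‖v‖ = ∑' j, ‖v j‖ := (l1_hasSum v).tsum_eq.symm

lemma pair_norm_le (f : ℕ → ℂ) (hf : ∀ j, ‖f j‖ ≤ 1) (v : L1) (j : ℕ) :
    ‖f j * v j‖ ≤ ‖v j‖ := by
  calc ‖f j * v j‖ = ‖f j‖ * ‖v j‖ := norm_mul _ _
  _ ≤ 1 * ‖v j‖ := by gcongr; exact hf j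
  _ = ‖v j‖ := one_mul _

lemma pair_summable_norm (f : ℕ → ℂ) (hf : ∀ j, ‖f j‖ ≤ 1) (v : L1) :
    Summable (fun j => ‖f j * v j‖) :=
  Summable.of_nonneg_of_le (fun _ => norm_nonneg _) (pair_norm_le f hf v) (l1_summable v)

lemma pair_summable (f : ℕ → ℂ) (hf : ∀ j, ‖f j‖ ≤ 1) (v : L1) :
    Summable (fun j => f j * v j) :=
  (pair_summable_norm f hf v).of_norm

lemma pair_bound (f : ℕ → ℂ) (hf : ∀ j, ‖f j‖ ≤ 1) (v : L1) :
    ‖∑' j, f j * v j‖ ≤ ‖v‖ := by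
  calc ‖∑' j, f j * v j‖ ≤ ∑' j, ‖f j * v j‖ :=
        norm_tsum_le_tsum_norm (pair_summable_norm f hf v)
  _ ≤ ∑' j, ‖v j‖ := Summable.tsum_le_tsum (pair_norm_le f hf v) (pair_summable_norm f hf v) (l1_summable v)
  _ = ‖v‖ := (l1_norm_eq v).symm

/-- The functional on ℓ¹ given by pairing with a bounded sequence. -/
noncomputable def pairing (f : ℕ → ℂ) (hf : ∀ j, ‖f j‖ ≤ 1) : StrongDual ℂ L1 :=
  LinearMap.mkContinuous
    { toFun := fun v => ∑' j, f j * v j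
      map_add' := by
        intro v w
        rw [← Summable.tsum_add (pair_summable f hf v) (pair_summable f hf w)]
        exact tsum_congr fun j => by simp [mul_add]
      map_smul' := by
        intro c v
        simp only [RingHom.id_apply, smul_eq_mul, ← tsum_mul_left]
        exact tsum_congr fun j => by simp; ring }
    1
    (fun v => by simpa using pair_bound f hf v)

lemma pairing_apply (f : ℕ → ℂ) (hf : ∀ j, ‖f j‖ ≤ 1) (v : L1) :
    pairing f hf v = ∑' j, f j * v j := rfl

/-- Schur-type lemma: for a sequence of unit vectors in ℓ¹ there is a norm-one functional
whose values along the sequence stay bounded away from zero on an infinite set. -/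
lemma exists_good_functional (x : ℕ → L1) (hx : ∀ n, ‖x n‖ = 1) :
    ∃ (f : ℕ → ℂ) (hf : ∀ j, ‖f j‖ ≤ 1) (c : ℝ), 0 < c ∧
      {n | c ≤ ‖pairing f hf (x n)‖}.Infinite := by
  by_cases hco : ∀ k, Tendsto (fun n => (x n) k) atTop (𝓝 0)
  · -- gliding hump
    -- step existence
    have step : ∀ p : ℕ × ℕ, ∃ q : ℕ × ℕ, p.1 < q.1 ∧ p.2 < q.2 ∧
        (∑ j ∈ Finset.range p.2, ‖x q.1 j‖) ≤ 1/8 ∧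
        (7:ℝ)/8 ≤ ∑ j ∈ Finset.range q.2, ‖x q.1 j‖ := by
      rintro ⟨N, m0⟩
      have h1 : Tendsto (fun n => ∑ j ∈ Finset.range m0, ‖x n j‖) atTop (𝓝 0) := by
        have := tendsto_finset_sum (Finset.range m0)
          (fun j _ => ((hco j).norm : Tendsto (fun n => ‖(x n) j‖) atTop (𝓝 ‖(0:ℂ)‖)))
        simpa using this
      have h2 : ∀ᶠ n in atTop, ∑ j ∈ Finset.range m0, ‖x n j‖ ≤ 1/8 :=
        h1.eventually_le_const (by norm_num)
      obtain ⟨n, hhead, hn⟩ := (h2.and (eventually_gt_atTop N)).exists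
      have h3 : Tendsto (fun m => ∑ j ∈ Finset.range m, ‖x n j‖) atTop (𝓝 1) := by
        have := (l1_hasSum (x n)).tendsto_sum_nat
        rwa [hx n] at this
      have h4 : ∀ᶠ m in atTop, (7:ℝ)/8 ≤ ∑ j ∈ Finset.range m, ‖x n j‖ :=
        h3.eventually_const_le (by norm_num)
      obtain ⟨m1, hbig, hm1⟩ := (h4.and (eventually_gt_atTop m0)).exists
      exact ⟨(n, m1), hn, hm1, hhead, hbig⟩
    choose stepf h1 h2 h3 h4 using step
    set s : ℕ → ℕ × ℕ := fun k => Nat.rec (stepf (0, 0)) (fun _ q => stepf q) k with hs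
    have hs0 : s 0 = stepf (0, 0) := rfl
    have hssucc : ∀ k, s (k + 1) = stepf (s k) := fun k => rfl
    set a : ℕ → ℕ := fun k => (s k).1 with ha
    set m : ℕ → ℕ := fun k => Nat.rec 0 (fun k' _ => (s k').2) k with hm
    have hm0 : m 0 = 0 := rfl
    have hmsucc : ∀ k, m (k + 1) = (s k).2 := fun k => rfl
    have mlt : ∀ k, m k < m (k + 1) := by
      intro k
      cases k with
      | zero => simpa [hm0, hmsucc, hs0] using h2 (0, 0)
      | succ k' => simpa [hmsucc, hssucc] using h2 (s k')
    have alt : ∀ k, a k < a (k + 1) := by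
      intro k
      simpa [ha, hssucc] using h1 (s k)
    have head : ∀ k, (∑ j ∈ Finset.range (m k), ‖x (a k) j‖) ≤ 1/8 := by
      intro k
      cases k with
      | zero => simp [hm0]
      | succ k' => simpa [hmsucc, ha, hssucc] using h3 (s k')
    have big : ∀ k, (7:ℝ)/8 ≤ ∑ j ∈ Finset.range (m (k + 1)), ‖x (a k) j‖ := by
      intro k
      cases k with
      | zero => simpa [hmsucc, ha, hs0] using h4 (0, 0)
      | succ k' => simpa [hmsucc, ha, hssucc] using h4 (s k')
    have mmono : StrictMono m := strictMono_nat_of_lt_succ mlt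
    have amono : StrictMono a := strictMono_nat_of_lt_succ alt
    -- the block index of j
    have hKex : ∀ j : ℕ, ∃ k, j < m (k + 1) := fun j =>
      ⟨j, lt_of_lt_of_le (Nat.lt_succ_self j) (mmono.le_apply)⟩
    set K : ℕ → ℕ := fun j => Nat.find (hKex j) with hKdef
    have hK1 : ∀ j, j < m (K j + 1) := fun j => Nat.find_spec (hKex j)
    have hK2 : ∀ j, m (K j) ≤ j := by
      intro j
      rcases Nat.eq_zero_or_pos (K j) with h | h
      · simp [h, hm0]
      · obtain ⟨k', hk'⟩ := Nat.exists_eq_add_of_lt h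
        have := Nat.find_min (hKex j) (show k' < K j by omega)
        push_neg at this
        calc m (K j) = m (k' + 1) := by rw [hk']; ring_nf
        _ ≤ j := this
    have Kuniq : ∀ j k, m k ≤ j → j < m (k + 1) → K j = k := by
      intro j k hl hr
      rcases lt_trichotomy (K j) k with h | h | h
      · exfalso
        have hmk : m (K j + 1) ≤ m k := mmono.monotone (Nat.succ_le_of_lt h)
        have hj1 := hK1 j
        omega
      · exact h
      · exfalso
        have := Nat.find_min (hKex j) h
        exact this hr
    -- the hump functional
    set f : ℕ → ℂ := fun j =>
      if h : (x (a (K j))) j = 0 then 0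
      else (starRingEnd ℂ) ((x (a (K j))) j) / ‖(x (a (K j))) j‖ with hfdef
    have hf : ∀ j, ‖f j‖ ≤ 1 := by
      intro j
      simp only [hfdef]
      split
      · simp
      · rename_i hz
        rw [norm_div]
        have : ‖((‖(x (a (K j))) j‖ : ℝ) : ℂ)‖ = ‖(x (a (K j))) j‖ := by
          simp [Complex.norm_real]
        rw [this, RingHomIsometric.norm_map, div_self (by simpa using hz)]
    have hfz : ∀ j, f j * (x (a (K j))) j = (‖(x (a (K j))) j‖ : ℂ) := by
      intro j
      simp only [hfdef]
      split
      · rename_i hz; simp [hz]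
      · rename_i hz
        set z := (x (a (K j))) j
        have hz' : (‖z‖ : ℂ) ≠ 0 := by simpa using hz
        field_simp
        rw [mul_comm, Complex.mul_conj]
        norm_cast
        rw [← Complex.sq_norm]
    -- main estimate
    have main : ∀ k, (1:ℝ)/2 ≤ ‖pairing f hf (x (a k))‖ := by
      intro k
      set v : L1 := x (a k) with hv
      set B : Finset ℕ := Finset.Ico (m k) (m (k + 1)) with hB
      have hBK : ∀ j ∈ B, K j = k := by
        intro j hj
        rw [hB, Finset.mem_Ico] at hj
        exact Kuniq j k hj.1 hj.2
      have hsplit : (∑ j ∈ B, f j * v j) + ∑' (j : ((B : Set ℕ)ᶜ : Set ℕ)), f j * v j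
          = pairing f hf v := by
        rw [pairing_apply]
        exact Summable.sum_add_tsum_compl (pair_summable f hf v)
      have hSB : (∑ j ∈ B, f j * v j) = ((∑ j ∈ B, ‖v j‖ : ℝ) : ℂ) := by
        push_cast
        refine Finset.sum_congr rfl fun j hj => ?_
        have := hfz j
        rw [hBK j hj] at this
        exact this
      have hsum_split : (∑ j ∈ B, ‖v j‖) + ∑' (j : ((B : Set ℕ)ᶜ : Set ℕ)), ‖v j‖ = 1 := by
        rw [Summable.sum_add_tsum_compl (l1_summable v), ← l1_norm_eq v, hv, hx]
      have sB_lb : (3:ℝ)/4 ≤ ∑ j ∈ B, ‖v j‖ := by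
        rw [hB, Finset.sum_Ico_eq_sub _ (mmono.monotone (Nat.le_succ k))]
        have := big k
        have := head k
        linarith
      have tail_ub : ‖∑' (j : ((B : Set ℕ)ᶜ : Set ℕ)), f j * v j‖ ≤ 1/4 := by
        calc ‖∑' (j : ((B : Set ℕ)ᶜ : Set ℕ)), f j * v j‖
            ≤ ∑' (j : ((B : Set ℕ)ᶜ : Set ℕ)), ‖f (j : ℕ) * v j‖ :=
              norm_tsum_le_tsum_norm ((pair_summable_norm f hf v).subtype _)
        _ ≤ ∑' (j : ((B : Set ℕ)ᶜ : Set ℕ)), ‖v j‖ :=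
              Summable.tsum_le_tsum (fun j => pair_norm_le f hf v j)
                ((pair_summable_norm f hf v).subtype _) ((l1_summable v).subtype _)
        _ ≤ 1/4 := by linarith [hsum_split, sB_lb]
      have hnormSB : ‖(∑ j ∈ B, f j * v j)‖ = ∑ j ∈ B, ‖v j‖ := by
        rw [hSB, Complex.norm_real, Real.norm_eq_abs,
          abs_of_nonneg (Finset.sum_nonneg fun j _ => norm_nonneg _)]
      have key : ‖(∑ j ∈ B, f j * v j)‖ ≤ ‖pairing f hf v‖
          + ‖∑' (j : ((B : Set ℕ)ᶜ : Set ℕ)), f j * v j‖ := by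
        calc ‖(∑ j ∈ B, f j * v j)‖
            = ‖pairing f hf v - ∑' (j : ((B : Set ℕ)ᶜ : Set ℕ)), f j * v j‖ := by
              rw [← hsplit]; ring_nf
        _ ≤ _ := norm_sub_le _ _
      rw [hnormSB] at key
      linarith
    refine ⟨f, hf, 1/2, by norm_num, ?_⟩
    have : Set.range a ⊆ {n | 1/2 ≤ ‖pairing f hf (x n)‖} := by
      rintro _ ⟨k, rfl⟩
      exact main k
    exact Set.Infinite.mono this (Set.infinite_range_of_injective amono.injective)
  · -- some coordinate does not tend to 0
    push_neg at hco
    obtain ⟨k, hk⟩ := hco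
    rw [Metric.tendsto_atTop] at hk
    push_neg at hk
    obtain ⟨ε, hε, hfreq⟩ := hk
    set f : ℕ → ℂ := fun j => if j = k then 1 else 0 with hfdef
    have hf : ∀ j, ‖f j‖ ≤ 1 := by
      intro j; simp only [hfdef]; split <;> simp
    have happ : ∀ v : L1, pairing f hf v = v k := by
      intro v
      rw [pairing_apply]
      rw [tsum_eq_single k]
      · simp [hfdef]
      · intro b hb; simp [hfdef, hb]
    refine ⟨f, hf, ε, hε, ?_⟩
    rw [← Nat.frequently_atTop_iff_infinite, frequently_atTop]
    intro N
    obtain ⟨n, hnN, hdist⟩ := hfreq N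
    refine ⟨n, hnN, ?_⟩
    rw [happ]
    rwa [dist_zero_right] at hdist

/-- Let `T` be a bounded operator on `ℓ₁` (absolutely summable complex sequences).  If
`μ ∈ ℂ` lies in the approximate point spectrum of `T`, i.e. there are unit vectors `xₙ` with
`‖μ xₙ - T xₙ‖ → 0`, then `μ` is an eigenvalue of the second adjoint `T**`.  Consequently the
point spectrum of `T**` is non-empty. -/
theorem approx_point_spectrum_eigenvalue_bidual_ell_one
    (T : lp (fun _ : ℕ => ℂ) 1 →L[ℂ] lp (fun _ : ℕ => ℂ) 1)
    (μ : ℂ) (x : ℕ → lp (fun _ : ℕ => ℂ) 1)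
    (hx : ∀ n, ‖x n‖ = 1)
    (hlim : Tendsto (fun n => ‖μ • x n - T (x n)‖) atTop (𝓝 0)) :
    (∃ Φ : StrongDual ℂ (StrongDual ℂ (lp (fun _ : ℕ => ℂ) 1)), Φ ≠ 0 ∧ bidualOp T Φ = μ • Φ) ∧
    {ν : ℂ | ∃ Φ : StrongDual ℂ (StrongDual ℂ (lp (fun _ : ℕ => ℂ) 1)),
      Φ ≠ 0 ∧ bidualOp T Φ = ν • Φ}.Nonempty := by
  obtain ⟨f, hf, c, hc, hS⟩ := exists_good_functional x hx
  set S := {n | c ≤ ‖pairing f hf (x n)‖} with hSdef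
  have hfreq : ∃ᶠ n in atTop, n ∈ S := Nat.frequently_atTop_iff_infinite.2 hS
  have hNB : NeBot (atTop ⊓ 𝓟 S) := frequently_mem_iff_neBot.1 hfreq
  let U : Ultrafilter ℕ := Ultrafilter.of (atTop ⊓ 𝓟 S)
  have hU : (U : Filter ℕ) ≤ atTop ⊓ 𝓟 S := Ultrafilter.of_le _
  have hU1 : (U : Filter ℕ) ≤ atTop := hU.trans inf_le_left
  have hUS : S ∈ U := hU (mem_inf_of_right (mem_principal_self S))
  let ψ : ℕ → WeakDual ℂ (StrongDual ℂ L1) := fun n =>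
    StrongDual.toWeakDual (inclusionInDoubleDual ℂ L1 (x n))
  have hmem : ∀ n, ψ n ∈ WeakDual.toStrongDual ⁻¹' Metric.closedBall 0 1 := by
    intro n
    simp only [Set.mem_preimage, Metric.mem_closedBall, dist_zero_right]
    calc dist (WeakDual.toStrongDual (ψ n)) 0 = ‖inclusionInDoubleDual ℂ L1 (x n)‖ := dist_zero_right (inclusionInDoubleDual ℂ L1 (x n))
    _ ≤ ‖x n‖ := double_dual_bound ℂ L1 (x n)
    _ = 1 := hx n
  have hcpt := WeakDual.isCompact_closedBall (𝕜 := ℂ) (E := StrongDual ℂ L1) 0 1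
  obtain ⟨Φw, hΦmem, hΦ⟩ := hcpt.ultrafilter_le_nhds (U.map ψ)
    (le_principal_iff.2 (mem_map.2 (Filter.univ_mem' hmem)))
  have htend : Tendsto ψ U (𝓝 Φw) := hΦ
  have heval : ∀ g : StrongDual ℂ L1, Tendsto (fun n => g (x n)) (↑U) (𝓝 (Φw g)) := by
    intro g
    have := (tendsto_iff_forall_eval_tendsto_topDualPairing.1 htend) g
    exact this
  let Φ : StrongDual ℂ (StrongDual ℂ L1) := WeakDual.toStrongDual Φw
  have hΦapp : ∀ g, Φ g = Φw g := fun g => rfl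
  have hΦne : Φ ≠ 0 := by
    intro h0
    have h1 : Tendsto (fun n => ‖pairing f hf (x n)‖) (↑U) (𝓝 ‖Φw (pairing f hf)‖) :=
      (heval (pairing f hf)).norm
    have h2 : ∀ᶠ n in (U : Filter ℕ), c ≤ ‖pairing f hf (x n)‖ :=
      eventually_of_mem hUS (fun n hn => hn)
    have h3 : c ≤ ‖Φw (pairing f hf)‖ := ge_of_tendsto h1 h2
    have h4 : Φw (pairing f hf) = 0 := by
      have := congrArg (fun Ψ : StrongDual ℂ (StrongDual ℂ L1) => Ψ (pairing f hf)) h0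
      simpa [hΦapp] using this
    rw [h4] at h3
    simp at h3
    linarith
  have heq : bidualOp T Φ = μ • Φ := by
    ext g
    have hb : bidualOp T Φ g = Φ (g.comp T) := rfl
    have ht1 : Tendsto (fun n => g (T (x n))) (↑U) (𝓝 (Φ (g.comp T))) := by
      simpa [hΦapp] using heval (g.comp T)
    have hsmall : Tendsto (fun n => g (μ • x n - T (x n))) (↑U) (𝓝 0) := by
      apply squeeze_zero_norm (fun n => g.le_opNorm (μ • x n - T (x n)))
      have : Tendsto (fun n => ‖g‖ * ‖μ • x n - T (x n)‖) atTop (𝓝 (‖g‖ * 0)) :=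
        hlim.const_mul _
      rw [mul_zero] at this
      exact this.mono_left hU1
    have ht2 : Tendsto (fun n => g (T (x n))) (↑U) (𝓝 (μ * Φ g)) := by
      have hfun : (fun n => g (T (x n))) = fun n => μ * g (x n) - g (μ • x n - T (x n)) := by
        funext n
        rw [map_sub, map_smul]
        simp only [smul_eq_mul]
        ring
      rw [hfun]
      have := ((heval g).const_mul μ).sub hsmall
      rw [sub_zero] at this
      simpa [hΦapp] using this
    have := tendsto_nhds_unique ht1 ht2
    rw [hb, this]
    simp
  exact ⟨⟨Φ, hΦne, heq⟩, ⟨μ, Φ, hΦne, heq⟩⟩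
end
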